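/- arXiv:1704.08037 — 2 statements merged into one kernel-verified Lean document; each statement's English description precedes it below -/
import Mathlib

section
/- Let A be a nonscalar n×n matrix over a field F and γ ∈ F. Then A is similar to a matrix whose (1,1) entry is γ. -/
/-!
An endomorphism that maps every line into itself is a homothety, so the non-scalar `A` has a
vector `x` with `x, A x` linearly independent; then so are `x` and `y := A x - γ x`. In a basis
beginning with `x, y` we have `A x = γ x + y`, so the matrix of `A` in that basis, which is
conjugate to `A`, has `(0, 0)` entry `γ`.
-/

open Module Matrix

theorem Matrix.exists_linearIndependent_pair_mulVec {R ι : Type*} [CommRing R] [IsDomain R]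
    [Fintype ι] [DecidableEq ι] (A : Matrix ι ι R) (hA : ∀ c : R, A ≠ c • 1) :
    ∃ x : ι → R, LinearIndependent R ![x, A *ᵥ x] := by
  by_contra! h
  obtain ⟨c, hc⟩ := (Matrix.toLin' A).exists_eq_smul_id_of_forall_notLinearIndependent
    (by simpa using h)
  exact hA c (by simpa using congrArg LinearMap.toMatrix' hc)

@[simp]
theorem Module.Basis.sumExtend_apply_inl {K V ι : Type*} [DivisionRing K] [AddCommGroup V]
    [Module K V] {v : ι → V} (hv : LinearIndependent K v) (i : ι) :
    Basis.sumExtend hv (Sum.inl i) = v i := by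
  simp only [Basis.sumExtend, Basis.reindex_apply, Basis.extend_apply_self]
  rfl

theorem LinearIndependent.exists_basis_fin_castLE_eq {K V : Type*} [DivisionRing K]
    [AddCommGroup V] [Module K V] [FiniteDimensional K V] {m n : ℕ} {v : Fin m → V}
    (hv : LinearIndependent K v) (hn : finrank K V = n) (hmn : m ≤ n) :
    ∃ b : Basis (Fin n) K V, ∀ i, b (Fin.castLE hmn i) = v i := by
  let b₀ := Basis.sumExtend hv
  have : Finite (Fin m ⊕ Basis.sumExtendIndex hv) := Module.Finite.finite_basis b₀
  have : Finite (Basis.sumExtendIndex hv) := Finite.sum_right (Fin m)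
  have hcard : Nat.card (Basis.sumExtendIndex hv) = n - m := by
    have := (finrank_eq_nat_card_basis b₀).symm
    rw [Nat.card_sum, Nat.card_eq_fintype_card, Fintype.card_fin] at this
    omega
  let e : Fin m ⊕ Basis.sumExtendIndex hv ≃ Fin n :=
    ((Equiv.refl _).sumCongr (Finite.equivFinOfCardEq hcard)).trans
      (finSumFinEquiv.trans (finCongr (Nat.add_sub_cancel' hmn)))
  refine ⟨b₀.reindex e, fun i => ?_⟩
  have he : e.symm (Fin.castLE hmn i) = Sum.inl i := e.symm_apply_eq.mpr (Fin.ext rfl)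
  simp [b₀, he]

theorem Matrix.exists_units_conj_eq_toMatrix {R ι : Type*} [CommRing R] [Fintype ι]
    [DecidableEq ι] (A : Matrix ι ι R) (b : Basis ι R (ι → R)) :
    ∃ P : (Matrix ι ι R)ˣ,
      P.val * A * P⁻¹.val = LinearMap.toMatrix b b (Matrix.toLin' A) := by
  let e := Pi.basisFun R ι
  refine ⟨⟨b.toMatrix e, e.toMatrix b, b.toMatrix_mul_toMatrix_flip e,
    e.toMatrix_mul_toMatrix_flip b⟩, ?_⟩
  rw [← basis_toMatrix_mul_linearMap_toMatrix_mul_basis_toMatrix (b' := e) (c' := e),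
    LinearMap.toMatrix_eq_toMatrix', LinearMap.toMatrix'_toLin']
  rfl

theorem stmt_15 {F : Type*} [Field F] {n : ℕ}
    (A : Matrix (Fin (n + 2)) (Fin (n + 2)) F)
    (hA : ∀ c : F, A ≠ c • (1 : Matrix (Fin (n + 2)) (Fin (n + 2)) F)) (γ : F) :
    ∃ P : (Matrix (Fin (n + 2)) (Fin (n + 2)) F)ˣ,
      (P.val * A * P⁻¹.val) 0 0 = γ := by
  obtain ⟨x, hx⟩ := A.exists_linearIndependent_pair_mulVec hA
  set y := -γ • x + A *ᵥ x with hy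
  have hxy : LinearIndependent F ![x, y] := by
    rwa [hy, LinearIndependent.pair_add_smul_right_iff]
  obtain ⟨b, hb⟩ := hxy.exists_basis_fin_castLE_eq (finrank_fin_fun F) (by omega)
  have hb0 : b 0 = x := hb 0
  have hAx : A *ᵥ x = γ • b 0 + b 1 := by
    rw [hb0, show b 1 = y from hb 1, hy]
    module
  obtain ⟨P, hP⟩ := A.exists_units_conj_eq_toMatrix b
  refine ⟨P, ?_⟩
  rw [hP, LinearMap.toMatrix_apply, Matrix.toLin'_apply, hb0, hAx]
  simp
end

section
/- Let A be a nondiagonal n×n integer matrix. Then A is similar over ℤ to an integer matrix that has, in some row r, all off-diagonal entries equal to 1, provided A has an off-diagonal entry equal to 1. -/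
/-!
Conjugate by `P = 1 + e_s vᵀ`, which adds multiples of the other rows to row `s`. If `v s = 0`
then `(e_s vᵀ)² = 0`, so `P` is unimodular with inverse `1 - e_s vᵀ`. As `r ≠ s`, row `r` of
`P * A * P⁻¹` is row `r` of `A * (1 - e_s vᵀ)`, namely `A r - A r s • v = A r - v`. Taking
`v = A r - 1` with its `s`-entry replaced by `0` makes every entry of that row outside
column `r` equal to `1`.
-/

namespace Units

variable {R : Type*} [Ring R]

def oneAddOfMulSelfEqZero (x : R) (hx : x * x = 0) : Rˣ where
  val := 1 + x
  inv := 1 - x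
  val_inv := by rw [mul_sub, mul_one, add_mul, one_mul, hx, add_zero, add_sub_cancel_right]
  inv_val := by rw [sub_mul, one_mul, mul_add, mul_one, hx, add_zero, add_sub_cancel_right]

theorem val_oneAddOfMulSelfEqZero (x : R) (hx : x * x = 0) :
    (oneAddOfMulSelfEqZero x hx : R) = 1 + x :=
  rfl

theorem val_inv_oneAddOfMulSelfEqZero (x : R) (hx : x * x = 0) :
    ((oneAddOfMulSelfEqZero x hx)⁻¹ : Rˣ).val = 1 - x :=
  rfl

end Units

namespace Matrix

variable {n R : Type*} [Fintype n] [CommRing R]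

theorem vecMulVec_mul_self_eq_zero {u v : n → R} (h : v ⬝ᵥ u = 0) :
    vecMulVec u v * vecMulVec u v = 0 := by
  rw [vecMulVec_mul_vecMulVec, h, zero_smul]
  ext i j
  simp [vecMulVec_apply]

variable [DecidableEq n]

theorem one_add_vecMulVec_mul_apply_of_eq_zero (M : Matrix n n R) {u : n → R} (v : n → R)
    {i : n} (hi : u i = 0) : ((1 + vecMulVec u v) * M) i = M i := by
  ext j
  simp [add_mul, vecMulVec_mul, vecMulVec_apply, hi]

theorem mul_one_sub_vecMulVec_apply (M : Matrix n n R) (u v : n → R) (i : n) :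
    (M * (1 - vecMulVec u v)) i = M i - (M i ⬝ᵥ u) • v := by
  ext j
  simp [mul_sub, mul_vecMulVec, vecMulVec_apply, mulVec]

theorem one_add_vecMulVec_mul_mul_one_sub_vecMulVec_apply (M : Matrix n n R) {u : n → R}
    (v : n → R) {i : n} (hi : u i = 0) :
    ((1 + vecMulVec u v) * M * (1 - vecMulVec u v)) i = M i - (M i ⬝ᵥ u) • v := by
  rw [mul_one_sub_vecMulVec_apply, one_add_vecMulVec_mul_apply_of_eq_zero M v hi]

end Matrix

open Matrix in
theorem stmt_16 {n : ℕ}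
    (A : Matrix (Fin n) (Fin n) ℤ)
    (r s : Fin n) (hrs : r ≠ s) (hArs : A r s = 1) :
    ∃ P : (Matrix (Fin n) (Fin n) ℤ)ˣ, ∃ r' : Fin n,
      ∀ k, k ≠ r' → (P.val * A * P⁻¹.val) r' k = 1 := by
  set v := Function.update (A r - 1) s 0
  have hv : v ⬝ᵥ Pi.single s 1 = 0 := by simp [v]
  refine ⟨Units.oneAddOfMulSelfEqZero _ (vecMulVec_mul_self_eq_zero hv), r, fun k _ => ?_⟩
  rw [Units.val_oneAddOfMulSelfEqZero, Units.val_inv_oneAddOfMulSelfEqZero,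
    one_add_vecMulVec_mul_mul_one_sub_vecMulVec_apply A v (Pi.single_eq_of_ne hrs 1),
    dotProduct_single_one, hArs, one_smul]
  by_cases hks : k = s
  · simp [hks, hArs, v]
  · simp [hks, v]
end
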